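/- For 1 ≤ k < ℓ and q ∈ ℂ^× with q² a primitive ℓ-th root of unity, and t, z ∈ ℂ^× satisfying q^t z² = 1, the alternating sum ∑_{i=1}^{k+1} (-1)^i q^{(k+1)i} [k choose i-1]_q equals -q^{k+1}·∏_{i=1}^{k} (1 - q^{2i}), which is nonzero. (The equality of the sum with the product holds for any q with q² ≠ 1; the nonvanishing uses that q² is a primitive ℓ-th root of unity and k < ℓ.) -/

import Mathlib

/-- The (balanced) q-number `[k]_q = (q^k - q^{-k})/(q - q⁻¹)`. -/
noncomputable def qNum (q : ℂ) (k : ℤ) : ℂ := (q ^ k - q ^ (-k)) / (q - q⁻¹)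

/-- The q-factorial `[n]_q!`. -/
noncomputable def qFact (q : ℂ) : ℕ → ℂ
  | 0 => 1
  | n + 1 => qNum q ((n : ℤ) + 1) * qFact q n

/-- The q-binomial coefficient. -/
noncomputable def qBinom (q : ℂ) (m n : ℤ) : ℂ :=
  if 0 ≤ n ∧ n ≤ m then qFact q m.toNat / (qFact q n.toNat * qFact q (m - n).toNat) else 0

/-!
Write `Q = q²`, `(Q; Q)_n = ∏_{i=1}^n (1 - Q^i)` and `G(n, j)` for the Gaussian binomial
in base `Q`.
Since `[n]_q (Q - 1) q^(n-1) = Q^n - 1`, the balanced factorial satisfies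
`[n]_q! (Q - 1)^n q^(n choose 2) = (-1)^n (Q; Q)_n`, hence `[j + d choose j]_q q^(jd) = G(j + d, j)`
as long as `(Q; Q)_(j+d) ≠ 0` (otherwise `qBinom` divides by zero).
The sum then becomes `-q^(k+1) ∑_j (-1)^j Q^(j+1 choose 2) G(k, j)`, and Rothe's identity
`∏_{i<k} (1 + Q^i x) = ∑_j Q^(j choose 2) G(k, j) x^j` at `x = -Q` evaluates it to
`-q^(k+1) (Q; Q)_k`. No factor `1 - Q^i` with `1 ≤ i ≤ k < ℓ` vanishes, `Q` being a primitive
`ℓ`-th root of unity.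
-/

open Finset

section GaussBinom

variable {R : Type*} [CommRing R]

def gaussBinom (Q : R) : ℕ → ℕ → R
  | _, 0 => 1
  | 0, _ + 1 => 0
  | n + 1, j + 1 => gaussBinom Q n j + Q ^ (j + 1) * gaussBinom Q n (j + 1)

def qPochhammer (Q : R) (n : ℕ) : R := ∏ i ∈ Icc 1 n, (1 - Q ^ i)

variable (Q : R)

@[simp] lemma gaussBinom_zero_right (n : ℕ) : gaussBinom Q n 0 = 1 := by cases n <;> rfl

lemma gaussBinom_succ_succ (n j : ℕ) :
    gaussBinom Q (n + 1) (j + 1) = gaussBinom Q n j + Q ^ (j + 1) * gaussBinom Q n (j + 1) := rfl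

lemma gaussBinom_eq_zero_of_lt : ∀ {n j : ℕ}, n < j → gaussBinom Q n j = 0
  | 0, _ + 1, _ => rfl
  | n + 1, j + 1, h => by
    rw [gaussBinom_succ_succ, gaussBinom_eq_zero_of_lt (by omega),
      gaussBinom_eq_zero_of_lt (by omega), mul_zero, add_zero]

@[simp] lemma gaussBinom_self : ∀ n : ℕ, gaussBinom Q n n = 1
  | 0 => rfl
  | n + 1 => by
    rw [gaussBinom_succ_succ, gaussBinom_self n, gaussBinom_eq_zero_of_lt Q n.lt_succ_self,
      mul_zero, add_zero]

@[simp] lemma qPochhammer_zero : qPochhammer Q 0 = 1 := rfl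

lemma qPochhammer_succ (n : ℕ) :
    qPochhammer Q (n + 1) = qPochhammer Q n * (1 - Q ^ (n + 1)) :=
  prod_Icc_succ_top (by omega) _

lemma prod_range_one_sub_pow_succ (n : ℕ) :
    ∏ i ∈ range n, (1 - Q ^ (i + 1)) = qPochhammer Q n := by
  induction n with
  | zero => rfl
  | succ n ih => rw [prod_range_succ, ih, qPochhammer_succ]

/-- Rothe's `q`-binomial theorem. -/
theorem prod_range_one_add_pow_mul (n : ℕ) (x : R) :
    ∏ i ∈ range n, (1 + Q ^ i * x) =
      ∑ j ∈ range (n + 1), Q ^ j.choose 2 * gaussBinom Q n j * x ^ j := by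
  induction n generalizing x with
  | zero => simp
  | succ n ih =>
    have hsum : ∑ j ∈ range (n + 1), Q ^ j.choose 2 * gaussBinom Q n j * (Q * x) ^ j =
        ∑ j ∈ range (n + 1), Q ^ (j + 1).choose 2 * gaussBinom Q n j * x ^ j := by
      refine sum_congr rfl fun j _ => ?_
      rw [Nat.choose_succ_succ', Nat.choose_one_right]
      ring
    have hshift : ∑ j ∈ range (n + 1),
        Q ^ (j + 1).choose 2 * (Q ^ (j + 1) * gaussBinom Q n (j + 1)) * x ^ (j + 1) + 1 =
        ∑ j ∈ range (n + 1), Q ^ (j + 1).choose 2 * gaussBinom Q n j * x ^ j := by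
      rw [sum_range_succ, gaussBinom_eq_zero_of_lt Q n.lt_succ_self, sum_range_succ' _ n]
      simp only [mul_zero, zero_mul, add_zero]
      congr 1
      · refine sum_congr rfl fun j _ => ?_
        rw [Nat.choose_succ_succ' (j + 1), Nat.choose_one_right]
        ring
      · simp
    have hmul : (∑ j ∈ range (n + 1), Q ^ (j + 1).choose 2 * gaussBinom Q n j * x ^ j) * x =
        ∑ j ∈ range (n + 1), Q ^ (j + 1).choose 2 * gaussBinom Q n j * x ^ (j + 1) := by
      simp_rw [sum_mul, pow_succ x, mul_assoc]
    rw [prod_range_succ', pow_zero, one_mul]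
    simp_rw [pow_succ Q, mul_assoc _ Q x]
    rw [ih, hsum, sum_range_succ' _ (n + 1)]
    simp only [gaussBinom_succ_succ, gaussBinom_zero_right, Nat.choose_zero_succ, mul_add, add_mul,
      sum_add_distrib]
    linear_combination hmul - hshift

theorem sum_neg_one_pow_mul_gaussBinom (n : ℕ) :
    ∑ j ∈ range (n + 1), (-1) ^ j * Q ^ (j + 1).choose 2 * gaussBinom Q n j = qPochhammer Q n := by
  calc ∑ j ∈ range (n + 1), (-1) ^ j * Q ^ (j + 1).choose 2 * gaussBinom Q n j
      = ∑ j ∈ range (n + 1), Q ^ j.choose 2 * gaussBinom Q n j * (-Q) ^ j :=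
        sum_congr rfl fun j _ => by rw [Nat.choose_succ_succ', Nat.choose_one_right, neg_pow]; ring
    _ = ∏ i ∈ range n, (1 + Q ^ i * -Q) := (prod_range_one_add_pow_mul Q n (-Q)).symm
    _ = qPochhammer Q n := by
      rw [← prod_range_one_sub_pow_succ]
      exact prod_congr rfl fun i _ => by ring

theorem gaussBinom_add_mul_qPochhammer :
    ∀ j d : ℕ, gaussBinom Q (j + d) j * qPochhammer Q j * qPochhammer Q d = qPochhammer Q (j + d)
  | 0, d => by simp
  | j + 1, 0 => by simp
  | j + 1, d + 1 => by
    have h₁ := gaussBinom_add_mul_qPochhammer j (d + 1)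
    have h₂ := gaussBinom_add_mul_qPochhammer (j + 1) d
    rw [show j + (d + 1) = j + 1 + d by omega, qPochhammer_succ Q d] at h₁
    rw [qPochhammer_succ Q j] at h₂
    rw [show j + 1 + (d + 1) = j + 1 + d + 1 by omega, gaussBinom_succ_succ,
      qPochhammer_succ Q (j + 1 + d), qPochhammer_succ Q j, qPochhammer_succ Q d]
    linear_combination (1 - Q ^ (j + 1)) * h₁ + Q ^ (j + 1) * (1 - Q ^ (d + 1)) * h₂

end GaussBinom

theorem IsPrimitiveRoot.qPochhammer_ne_zero {R : Type*} [CommRing R] [IsDomain R] {Q : R} {ℓ n : ℕ}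
    (hQ : IsPrimitiveRoot Q ℓ) (hn : n < ℓ) : qPochhammer Q n ≠ 0 :=
  prod_ne_zero_iff.2 fun i hi => sub_ne_zero.2 <| Ne.symm <|
    hQ.pow_ne_one_of_pos_of_lt (by grind) (by grind)

lemma Nat.add_choose_two (m n : ℕ) : (m + n).choose 2 = m.choose 2 + n.choose 2 + m * n := by
  induction n with
  | zero => simp
  | succ n ih =>
    rw [← add_assoc, Nat.choose_succ_succ', Nat.choose_succ_succ' n, Nat.choose_one_right,
      Nat.choose_one_right, ih]
    ring

section Balanced

variable {q : ℂ}

lemma qNum_succ_mul (hq0 : q ≠ 0) (hq1 : q ^ 2 ≠ 1) (n : ℕ) :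
    qNum q ((n : ℤ) + 1) * ((q ^ 2 - 1) * q ^ n) = (q ^ 2) ^ (n + 1) - 1 := by
  have hden : q - q⁻¹ ≠ 0 := by
    rw [show q - q⁻¹ = (q ^ 2 - 1) / q by field_simp]
    exact div_ne_zero (sub_ne_zero.2 hq1) hq0
  rw [qNum, show (n : ℤ) + 1 = ((n + 1 : ℕ) : ℤ) by push_cast; rfl, zpow_neg, zpow_natCast,
    div_mul_eq_mul_div, div_eq_iff hden]
  field_simp
  ring

lemma qFact_mul_eq_qPochhammer (hq0 : q ≠ 0) (hq1 : q ^ 2 ≠ 1) (n : ℕ) :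
    qFact q n * ((q ^ 2 - 1) ^ n * q ^ n.choose 2) = (-1) ^ n * qPochhammer (q ^ 2) n := by
  induction n with
  | zero => simp [qFact]
  | succ n ih =>
    rw [qFact, qPochhammer_succ, Nat.choose_succ_succ', Nat.choose_one_right]
    linear_combination (qNum q ((n : ℤ) + 1) * ((q ^ 2 - 1) * q ^ n)) * ih
      + (-1) ^ n * qPochhammer (q ^ 2) n * qNum_succ_mul hq0 hq1 n

lemma qFact_ne_zero (hq0 : q ≠ 0) (hq1 : q ^ 2 ≠ 1) {n : ℕ} (hP : qPochhammer (q ^ 2) n ≠ 0) :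
    qFact q n ≠ 0 :=
  left_ne_zero_of_mul <| (qFact_mul_eq_qPochhammer hq0 hq1 n).symm ▸
    mul_ne_zero (pow_ne_zero _ (by norm_num)) hP

lemma qBinom_natCast_add (j d : ℕ) :
    qBinom q ((j + d : ℕ) : ℤ) j = qFact q (j + d) / (qFact q j * qFact q d) := by
  rw [qBinom, if_pos ⟨by positivity, by omega⟩, Int.toNat_natCast, Int.toNat_natCast,
    show ((j + d : ℕ) : ℤ) - j = d by push_cast; ring, Int.toNat_natCast]

theorem qBinom_natCast_add_mul_pow (hq0 : q ≠ 0) (hq1 : q ^ 2 ≠ 1) {j d : ℕ}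
    (hP : qPochhammer (q ^ 2) (j + d) ≠ 0) :
    qBinom q ((j + d : ℕ) : ℤ) j * q ^ (j * d) = gaussBinom (q ^ 2) (j + d) j := by
  have hG := gaussBinom_add_mul_qPochhammer (q ^ 2) j d
  have hPd : qPochhammer (q ^ 2) d ≠ 0 := right_ne_zero_of_mul (hG ▸ hP)
  have hPj : qPochhammer (q ^ 2) j ≠ 0 := right_ne_zero_of_mul (left_ne_zero_of_mul (hG ▸ hP))
  have hj := qFact_mul_eq_qPochhammer hq0 hq1 j
  have hd := qFact_mul_eq_qPochhammer hq0 hq1 d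
  have hjd := qFact_mul_eq_qPochhammer hq0 hq1 (j + d)
  rw [Nat.add_choose_two] at hjd
  rw [qBinom_natCast_add, div_mul_eq_mul_div,
    div_eq_iff (mul_ne_zero (qFact_ne_zero hq0 hq1 hPj) (qFact_ne_zero hq0 hq1 hPd))]
  refine mul_right_cancel₀ (b := (q ^ 2 - 1) ^ (j + d) * q ^ (j.choose 2 + d.choose 2))
    (mul_ne_zero (pow_ne_zero _ (sub_ne_zero.2 hq1)) (pow_ne_zero _ hq0)) ?_
  linear_combination hjd
    - gaussBinom (q ^ 2) (j + d) j * (qFact q d * ((q ^ 2 - 1) ^ d * q ^ d.choose 2)) * hj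
    - gaussBinom (q ^ 2) (j + d) j * (-1) ^ j * qPochhammer (q ^ 2) j * hd - (-1) ^ (j + d) * hG

theorem sum_Icc_neg_one_pow_mul_qBinom (hq0 : q ≠ 0) (hq1 : q ^ 2 ≠ 1) {k : ℕ}
    (hP : qPochhammer (q ^ 2) k ≠ 0) :
    ∑ i ∈ Icc 1 (k + 1), (-1 : ℂ) ^ i * q ^ ((k + 1) * i) * qBinom q (k : ℤ) ((i : ℤ) - 1) =
      -q ^ (k + 1) * qPochhammer (q ^ 2) k := by
  rw [← sum_neg_one_pow_mul_gaussBinom, mul_sum, ← Ico_add_one_right_eq_Icc, sum_Ico_eq_sum_range,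
    add_tsub_cancel_right]
  refine sum_congr rfl fun j hj => ?_
  obtain ⟨d, rfl⟩ := Nat.exists_eq_add_of_le (mem_range_succ_iff.1 hj)
  rw [← qBinom_natCast_add_mul_pow hq0 hq1 hP, show ((1 + j : ℕ) : ℤ) - 1 = j by push_cast; ring,
    ← pow_mul, mul_comm 2, ← Nat.add_one_mul_choose_eq, Nat.choose_one_right]
  ring

end Balanced

theorem key_alternating_sum_general (q : ℂ) (ℓ k : ℕ)
    (hq0 : q ≠ 0) (hq : IsPrimitiveRoot (q ^ 2) ℓ)
    (hk1 : 1 ≤ k) (hkℓ : k < ℓ) :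
    (∑ i ∈ Finset.Icc 1 (k + 1),
        (-1 : ℂ) ^ i * q ^ ((k + 1) * i) * qBinom q (k : ℤ) ((i : ℤ) - 1) =
      -q ^ (k + 1) * ∏ i ∈ Finset.Icc 1 k, (1 - q ^ (2 * i))) ∧
    -q ^ (k + 1) * ∏ i ∈ Finset.Icc 1 k, (1 - q ^ (2 * i)) ≠ 0 := by
  have hP : qPochhammer (q ^ 2) k ≠ 0 := hq.qPochhammer_ne_zero hkℓ
  have hprod : ∏ i ∈ Icc 1 k, (1 - q ^ (2 * i)) = qPochhammer (q ^ 2) k := by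
    simp only [qPochhammer, pow_mul]
  rw [hprod]
  exact ⟨sum_Icc_neg_one_pow_mul_qBinom hq0 (hq.ne_one (by omega)) hP,
    mul_ne_zero (neg_ne_zero.2 (pow_ne_zero _ hq0)) hP⟩

/-- For `1 ≤ k < ℓ`, `q²` a primitive `ℓ`-th root of unity and `t, z` with `q^t z² = 1`,
`∑_{i=1}^{k+1} (-1)^i q^{(k+1)i} [k choose i-1]_q = -q^{k+1} ∏_{i=1}^{k} (1 - q^{2i}) ≠ 0`. -/
theorem key_alternating_sum (q z : ℂ) (ℓ k : ℕ) (t : ℤ)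
    (hq0 : q ≠ 0) (hz : z ≠ 0) (hq : IsPrimitiveRoot (q ^ 2) ℓ)
    (hk1 : 1 ≤ k) (hkℓ : k < ℓ) (htz : q ^ t * z ^ 2 = 1) :
    (∑ i ∈ Finset.Icc 1 (k + 1),
        (-1 : ℂ) ^ i * q ^ ((k + 1) * i) * qBinom q (k : ℤ) ((i : ℤ) - 1) =
      -q ^ (k + 1) * ∏ i ∈ Finset.Icc 1 k, (1 - q ^ (2 * i))) ∧
    -q ^ (k + 1) * ∏ i ∈ Finset.Icc 1 k, (1 - q ^ (2 * i)) ≠ 0 :=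
  key_alternating_sum_general q ℓ k hq0 hq hk1 hkℓ
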